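/- Let Ω and Ω' be positive semidefinite n×n complex matrices and let X be an n×n complex matrix with 0 ≤ X ≤ I. Then the trace norm of Ω^{1/2} X Ω^{1/2} − Ω'^{1/2} X Ω'^{1/2} satisfies ‖Ω^{1/2} X Ω^{1/2} − Ω'^{1/2} X Ω'^{1/2}‖₁ ≤ ((trace Ω)^{1/2} + (trace Ω')^{1/2}) · (‖Ω − Ω'‖₁)^{1/2}, where ‖M‖₁ = trace((M* M)^{1/2}) denotes the trace norm. -/

import Mathlib

/-!
Put `A = Ω^{1/2}`, `B = Ω'^{1/2}`, `T = AXA - BXB` and let `W = sign T`, a unitary with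
`WT = |T|`. Then `‖T‖₁ = Re tr(WT)` and `WT = (WAX)(A - B) + W(A - B)XB`, so Cauchy–Schwarz for
the Hilbert–Schmidt inner product, together with `X² ≤ 1`, gives
`‖T‖₁ ≤ (√tr Ω + √tr Ω') ‖A - B‖₂`. The Powers–Størmer inequality `‖A - B‖₂² ≤ ‖A² - B²‖₁`
finishes the proof: in an eigenbasis of `A - B` with eigenvalue `λ` at `v`, the identity
`2(A² - B²) = (A - B)(A + B) + (A + B)(A - B)` gives `⟨v, (A² - B²)v⟩ = λ⟨v, (A + B)v⟩`, while
`A + B ± (A - B) ≥ 0` gives `⟨v, (A + B)v⟩ ≥ |λ|`.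
-/

open Matrix ComplexOrder

/-- The square root of a positive semidefinite matrix (removed from Mathlib; old definition). -/
noncomputable def Matrix.PosSemidef.sqrt {n : ℕ} {A : Matrix (Fin n) (Fin n) ℂ} (hA : A.PosSemidef) :
    Matrix (Fin n) (Fin n) ℂ :=
  hA.1.eigenvectorUnitary.1 * diagonal ((↑) ∘ (Real.sqrt ·) ∘ hA.1.eigenvalues) *
    (star hA.1.eigenvectorUnitary : Matrix (Fin n) (Fin n) ℂ)

/-- The trace norm `‖M‖₁ = trace((Mᴴ M)^{1/2})` of a complex square matrix. -/
noncomputable def traceNorm {n : ℕ} (M : Matrix (Fin n) (Fin n) ℂ) : ℝ :=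
  ((Matrix.posSemidef_conjTranspose_mul_self M).sqrt).trace.re

open scoped MatrixOrder

theorem mul_self_le_one {R : Type*} [Ring R] [PartialOrder R] [StarRing R] [StarOrderedRing R]
    {x : R} (h₀ : 0 ≤ x) (h₁ : x ≤ 1) : x * x ≤ 1 := by
  have hx : IsSelfAdjoint x := .of_nonneg h₀
  have key : x - x * x = (1 - x) * x * (1 - x) + x * (1 - x) * x := by noncomm_ring
  have : 0 ≤ x - x * x := key ▸ add_nonneg
    (((IsSelfAdjoint.one R).sub hx).conjugate_nonneg h₀) (hx.conjugate_nonneg (sub_nonneg.2 h₁))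
  calc x * x ≤ x := sub_nonneg.1 this
    _ ≤ 1 := h₁

namespace Matrix

variable {n 𝕜 : Type*} [RCLike 𝕜]

theorem re_diag_nonneg {M : Matrix n n 𝕜} (hM : 0 ≤ M) (i : n) : 0 ≤ RCLike.re (M i i) :=
  (RCLike.nonneg_iff.mp (hM.posSemidef.diag_nonneg (i := i))).1

variable [Fintype n]

theorem re_trace_mono {M N : Matrix n n 𝕜} (h : M ≤ N) :
    RCLike.re M.trace ≤ RCLike.re N.trace := by
  have := (RCLike.nonneg_iff.mp (le_iff.mp h).trace_nonneg).1
  rwa [trace_sub, map_sub, sub_nonneg] at this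

/-- Cauchy–Schwarz for the Hilbert–Schmidt inner product `⟪M, N⟫ = tr (N * Mᴴ)`. -/
theorem re_trace_mul_le (M N : Matrix n n 𝕜) :
    RCLike.re (M * N).trace ≤ √(RCLike.re (Mᴴ * M).trace) * √(RCLike.re (N * Nᴴ).trace) := by
  classical
  let _ := toMatrixSeminormedAddCommGroup (1 : Matrix n n 𝕜) PosSemidef.one
  let _ := toMatrixInnerProductSpace (1 : Matrix n n 𝕜) PosSemidef.one
  have h : RCLike.re (N * 1 * Mᴴᴴ).trace
      ≤ √(RCLike.re (Mᴴ * 1 * Mᴴᴴ).trace) * √(RCLike.re (N * 1 * Nᴴ).trace) := by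
    with_unfolding_all exact re_inner_le_norm (𝕜 := 𝕜) Mᴴ N
  simpa only [mul_one, conjTranspose_conjTranspose, trace_mul_comm N] using h

variable [DecidableEq n]

theorem re_trace_mul_conjTranspose_mul_self_mul_le {X : Matrix n n 𝕜} (hX₀ : 0 ≤ X)
    (hX₁ : X ≤ 1) (M : Matrix n n 𝕜) :
    RCLike.re (X * (Mᴴ * M) * X).trace ≤ RCLike.re (Mᴴ * M).trace := by
  have h := star_right_conjugate_le_conjugate (mul_self_le_one hX₀ hX₁) M
  rw [mul_one] at h
  calc RCLike.re (X * (Mᴴ * M) * X).trace = RCLike.re (M * (X * X) * Mᴴ).trace := by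
        rw [trace_mul_comm, ← mul_assoc, ← mul_assoc, trace_mul_comm]
        simp only [mul_assoc]
    _ ≤ RCLike.re (M * Mᴴ).trace := re_trace_mono h
    _ = RCLike.re (Mᴴ * M).trace := by rw [trace_mul_comm]

theorem trace_conjStarAlgAut (u : unitary (Matrix n n 𝕜)) (M : Matrix n n 𝕜) :
    (Unitary.conjStarAlgAut 𝕜 _ u M).trace = M.trace := by
  rw [Unitary.conjStarAlgAut_apply, trace_mul_cycle, Unitary.coe_star_mul_self, one_mul]

namespace IsHermitian

variable {S : Matrix n n 𝕜}

theorem le_abs (hS : S.IsHermitian) : S ≤ CFC.abs S := by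
  rw [← sub_nonneg, CFC.abs_sub_self S hS]
  exact smul_nonneg zero_le_two (CFC.negPart_nonneg S)

theorem neg_abs_le (hS : S.IsHermitian) : -CFC.abs S ≤ S := by
  rw [neg_le_iff_add_nonneg', CFC.abs_add_self S hS]
  exact smul_nonneg zero_le_two (CFC.posPart_nonneg S)

/-- The unitary is the sign of `S`, which is a continuous function of `S` because the spectrum of
a matrix is finite. -/
theorem exists_unitary_mul_eq_abs (hS : S.IsHermitian) :
    ∃ W ∈ unitary (Matrix n n 𝕜), W * S = CFC.abs S := by
  have hcont (f : ℝ → ℝ) : ContinuousOn f (spectrum ℝ S) := S.finite_real_spectrum.continuousOn f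
  let sign : ℝ → ℝ := fun x => if 0 ≤ x then 1 else -1
  have hsign_sq (x : ℝ) : sign x * sign x = 1 := by unfold sign; split_ifs <;> norm_num
  have hsign_mul (x : ℝ) : sign x * x = ‖x‖ := by
    unfold sign
    split_ifs with h
    · simp [abs_of_nonneg h]
    · simp [abs_of_neg (not_le.1 h)]
  have hW : IsSelfAdjoint (cfc sign S) := cfc_predicate sign S
  refine ⟨cfc sign S, ?_, ?_⟩
  · have hWW : cfc sign S * cfc sign S = 1 := by
      rw [← cfc_mul sign sign S (hcont _) (hcont _)]
      simp only [hsign_sq]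
      exact cfc_const_one ℝ S
    exact ⟨by rw [hW.star_eq, hWW], by rw [hW.star_eq, hWW]⟩
  · calc cfc sign S * S = cfc sign S * cfc id S := by rw [cfc_id ℝ S]
      _ = cfc (fun x => sign x * id x) S := (cfc_mul sign id S (hcont _) (hcont _)).symm
      _ = CFC.abs S := by simp only [id, hsign_mul]; exact (CFC.abs_eq_cfc_norm S hS).symm

end IsHermitian

theorem re_trace_sub_mul_sub_le_of_eq_diagonal {A B P : Matrix n n 𝕜} (hA : 0 ≤ A)
    (hB : 0 ≤ B) {d : n → ℝ} (hd : A - B = diagonal fun i => (d i : 𝕜))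
    (hP₁ : -P ≤ A * A - B * B) (hP₂ : A * A - B * B ≤ P) :
    RCLike.re ((A - B) * (A - B)).trace ≤ RCLike.re P.trace := by
  have hentry (i : n) : d i ^ 2 ≤ RCLike.re (P i i) := by
    have hdi : d i = RCLike.re (A i i) - RCLike.re (B i i) := by
      simpa using congr_arg (fun M => RCLike.re (M i i)) hd.symm
    have hS : 2 * RCLike.re ((A * A - B * B) i i) = 2 * d i * RCLike.re ((A + B) i i) := by
      have h := congr_arg (fun M => RCLike.re (M i i))
        (show (2 : 𝕜) • (A * A - B * B) = (A - B) * (A + B) + (A + B) * (A - B) by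
          rw [two_smul]; noncomm_ring)
      simp only [smul_apply, hd, add_apply, diagonal_mul, mul_diagonal, map_add,
        RCLike.re_ofReal_mul, RCLike.re_mul_ofReal, smul_eq_mul] at h
      rw [← RCLike.ofReal_ofNat, RCLike.re_ofReal_mul] at h
      rw [add_apply, map_add]
      linarith
    have h₁ := re_diag_nonneg (sub_nonneg.2 hP₁) i
    have h₂ := re_diag_nonneg (sub_nonneg.2 hP₂) i
    have ha := re_diag_nonneg hA i
    have hb := re_diag_nonneg hB i
    simp only [sub_apply, neg_apply, map_sub, map_neg, add_apply, map_add] at h₁ h₂ hS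
    -- `dᵢ² ≤ |dᵢ| (Aᵢᵢ + Bᵢᵢ) = |(A² - B²)ᵢᵢ| ≤ Pᵢᵢ`
    rcases le_total 0 (d i) with h | h
    · nlinarith [mul_nonneg h hb]
    · nlinarith [mul_nonneg_of_nonpos_of_nonpos h (neg_nonpos.2 ha)]
  calc RCLike.re ((A - B) * (A - B)).trace = ∑ i, d i ^ 2 := by
        rw [hd, diagonal_mul_diagonal, trace_diagonal, map_sum]
        simp [sq]
    _ ≤ ∑ i, RCLike.re (P i i) := Finset.sum_le_sum fun i _ => hentry i
    _ = RCLike.re P.trace := by simp [trace]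

/-- The Powers–Størmer inequality. -/
theorem re_trace_sub_mul_sub_le {A B P : Matrix n n 𝕜} (hA : 0 ≤ A) (hB : 0 ≤ B)
    (hP₁ : -P ≤ A * A - B * B) (hP₂ : A * A - B * B ≤ P) :
    RCLike.re ((A - B) * (A - B)).trace ≤ RCLike.re P.trace := by
  have hC : (A - B).IsHermitian := hA.posSemidef.1.sub hB.posSemidef.1
  set φ := Unitary.conjStarAlgAut 𝕜 (Matrix n n 𝕜) (star hC.eigenvectorUnitary)
  have h := re_trace_sub_mul_sub_le_of_eq_diagonal (P := φ P) (map_nonneg φ hA) (map_nonneg φ hB)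
    (by rw [← map_sub]; exact hC.conjStarAlgAut_star_eigenvectorUnitary)
    (by simpa only [← map_mul, ← map_sub, ← map_neg] using OrderHomClass.mono φ hP₁)
    (by simpa only [← map_mul, ← map_sub] using OrderHomClass.mono φ hP₂)
  rwa [← map_sub, ← map_mul, trace_conjStarAlgAut, trace_conjStarAlgAut] at h

theorem re_trace_unitary_mul_sub_le {A B X W : Matrix n n 𝕜} (hA : 0 ≤ A) (hB : 0 ≤ B)
    (hX₀ : 0 ≤ X) (hX₁ : X ≤ 1) (hW : W ∈ unitary (Matrix n n 𝕜)) :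
    RCLike.re (W * (A * X * A - B * X * B)).trace ≤
      (√(RCLike.re (A * A).trace) + √(RCLike.re (B * B).trace)) *
        √(RCLike.re ((A - B) * (A - B)).trace) := by
  have hAh : Aᴴ = A := hA.posSemidef.1
  have hBh : Bᴴ = B := hB.posSemidef.1
  have hXh : Xᴴ = X := hX₀.posSemidef.1
  have hCh : (A - B)ᴴ = A - B := by rw [conjTranspose_sub, hAh, hBh]
  have hWW : Wᴴ * W = 1 := Unitary.star_mul_self_of_mem hW
  have hWW' : W * Wᴴ = 1 := Unitary.mul_star_self_of_mem hW
  have hsplit : (W * (A * X * A - B * X * B)).trace =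
      (W * A * X * (A - B)).trace + ((A - B) * (X * B * W)).trace := by
    have hcyc : ((A - B) * (X * B * W)).trace = (W * (A - B) * X * B).trace := by
      rw [trace_mul_comm, show X * B * W * (A - B) = X * B * (W * (A - B)) by simp only [mul_assoc],
        trace_mul_comm, mul_assoc _ X]
    rw [hcyc, ← trace_add]
    congr 1
    noncomm_ring
  have h₁ : RCLike.re ((W * A * X)ᴴ * (W * A * X)).trace ≤ RCLike.re (A * A).trace := by
    have : (W * A * X)ᴴ * (W * A * X) = X * (Aᴴ * A) * X := by
      simp only [conjTranspose_mul, hXh, mul_assoc]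
      rw [← mul_assoc Wᴴ, hWW, one_mul]
    simpa only [this, hAh] using re_trace_mul_conjTranspose_mul_self_mul_le hX₀ hX₁ A
  have h₂ : RCLike.re ((X * B * W) * (X * B * W)ᴴ).trace ≤ RCLike.re (B * B).trace := by
    have : (X * B * W) * (X * B * W)ᴴ = X * (Bᴴ * B) * X := by
      simp only [conjTranspose_mul, hXh, hBh, mul_assoc]
      rw [← mul_assoc W, hWW', one_mul]
    simpa only [this, hBh] using re_trace_mul_conjTranspose_mul_self_mul_le hX₀ hX₁ B
  calc RCLike.re (W * (A * X * A - B * X * B)).trace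
      = RCLike.re (W * A * X * (A - B)).trace + RCLike.re ((A - B) * (X * B * W)).trace := by
        rw [hsplit, map_add]
    _ ≤ √(RCLike.re (A * A).trace) * √(RCLike.re ((A - B) * (A - B)).trace)
        + √(RCLike.re ((A - B) * (A - B)).trace) * √(RCLike.re (B * B).trace) := by
      gcongr
      · refine (re_trace_mul_le _ _).trans ?_
        rw [hCh]
        gcongr
      · refine (re_trace_mul_le _ _).trans ?_
        rw [hCh]
        gcongr
    _ = _ := by ring

end Matrix

theorem Matrix.PosSemidef.sqrt_eq_cfcSqrt {n : ℕ} {A : Matrix (Fin n) (Fin n) ℂ}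
    (hA : A.PosSemidef) : hA.sqrt = CFC.sqrt A := by
  rw [CFC.sqrt_eq_real_sqrt A hA.nonneg, cfcₙ_eq_cfc, hA.1.cfc_eq]
  rfl

theorem traceNorm_eq_re_trace_abs {n : ℕ} (M : Matrix (Fin n) (Fin n) ℂ) :
    traceNorm M = (CFC.abs M).trace.re := by
  rw [traceNorm, PosSemidef.sqrt_eq_cfcSqrt]
  rfl

/-- For positive semidefinite `Ω`, `Ω'` and `0 ≤ X ≤ I`,
`‖Ω^{1/2}XΩ^{1/2} − Ω'^{1/2}XΩ'^{1/2}‖₁ ≤ (√tr Ω + √tr Ω')·(‖Ω − Ω'‖₁)^{1/2}`. -/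
theorem stmt12 {n : ℕ} (Ω Ω' X : Matrix (Fin n) (Fin n) ℂ)
    (hΩ : Ω.PosSemidef) (hΩ' : Ω'.PosSemidef)
    (hX0 : X.PosSemidef) (hX1 : (1 - X).PosSemidef) :
    traceNorm (hΩ.sqrt * X * hΩ.sqrt - hΩ'.sqrt * X * hΩ'.sqrt)
      ≤ (Real.sqrt Ω.trace.re + Real.sqrt Ω'.trace.re) * Real.sqrt (traceNorm (Ω - Ω')) := by
  rw [hΩ.sqrt_eq_cfcSqrt, hΩ'.sqrt_eq_cfcSqrt, traceNorm_eq_re_trace_abs,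
    traceNorm_eq_re_trace_abs]
  set A := CFC.sqrt Ω
  set B := CFC.sqrt Ω'
  have hA : 0 ≤ A := CFC.sqrt_nonneg Ω
  have hB : 0 ≤ B := CFC.sqrt_nonneg Ω'
  have hAA : A * A = Ω := CFC.sqrt_mul_sqrt_self Ω hΩ.nonneg
  have hBB : B * B = Ω' := CFC.sqrt_mul_sqrt_self Ω' hΩ'.nonneg
  have hT : (A * X * A - B * X * B).IsHermitian :=
    ((hA.posSemidef.1.eq ▸ hX0.conjTranspose_mul_mul_same A).1).sub
      (hB.posSemidef.1.eq ▸ hX0.conjTranspose_mul_mul_same B).1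
  obtain ⟨W, hW, hWT⟩ := hT.exists_unitary_mul_eq_abs
  have hPS : RCLike.re ((A - B) * (A - B)).trace ≤ RCLike.re (CFC.abs (Ω - Ω')).trace := by
    refine re_trace_sub_mul_sub_le hA hB ?_ ?_ <;> rw [hAA, hBB]
    exacts [(hΩ.1.sub hΩ'.1).neg_abs_le, (hΩ.1.sub hΩ'.1).le_abs]
  have hmain := re_trace_unitary_mul_sub_le hA hB hX0.nonneg (sub_nonneg.1 hX1.nonneg) hW
  rw [hWT, hAA, hBB] at hmain
  simp only [RCLike.re_to_complex] at hmain hPS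
  exact hmain.trans (by gcongr)
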